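/- Let H be a Hopf algebra, A a left H-module algebra and H-module coalgebra satisfying the Yetter–Drinfeld condition with Haar integral Λ. Then Λ ⊗ 1_H is central in the crossed product algebra A ⋊ H: (Λ⊗1)·(a⊗h) = Λa ⊗ h = (a⊗h)·(Λ⊗1) for all a ∈ A, h ∈ H. -/

import Mathlib

open TensorProduct Coalgebra

noncomputable section

/-- Given an action `act : H →ₗ (A →ₗ A)`, the induced "diagonal" operator
`act2 act h = ∑ (h₍₁₎ ▷ ·) ⊗ (h₍₂₎ ▷ ·)` on `A ⊗ A`. -/
def act2 {H A : Type*} [Ring H] [Ring A] [HopfAlgebra ℂ H] [HopfAlgebra ℂ A]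
    (act : H →ₗ[ℂ] A →ₗ[ℂ] A) : H →ₗ[ℂ] (A ⊗[ℂ] A →ₗ[ℂ] A ⊗[ℂ] A) :=
  (TensorProduct.homTensorHomMap (RingHom.id ℂ) A A A A) ∘ₗ (TensorProduct.map act act) ∘ₗ
    (comul : H →ₗ[ℂ] H ⊗[ℂ] H)

/-- The multiplication `(a ⊗ h) ⬝ (b ⊗ k) = a (h₍₁₎ ▷ b) ⊗ h₍₂₎ k` of the crossed
(smash) product `A ⋊ H`. -/
def crossedMul (H A : Type*) [Ring H] [Ring A] [HopfAlgebra ℂ H] [HopfAlgebra ℂ A]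
    (act : H →ₗ[ℂ] A →ₗ[ℂ] A) :
    (A ⊗[ℂ] H) ⊗[ℂ] (A ⊗[ℂ] H) →ₗ[ℂ] A ⊗[ℂ] H :=
  (TensorProduct.map (LinearMap.mul' ℂ A) LinearMap.id) ∘ₗ
  (TensorProduct.assoc ℂ A A H).symm.toLinearMap ∘ₗ
  (TensorProduct.map LinearMap.id
    ((TensorProduct.map (TensorProduct.lift act) (LinearMap.mul' ℂ H)) ∘ₗ
      (TensorProduct.tensorTensorTensorComm ℂ H H A H).toLinearMap)) ∘ₗ
  (TensorProduct.assoc ℂ A (H ⊗[ℂ] H) (A ⊗[ℂ] H)).toLinearMap ∘ₗ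
  (TensorProduct.map (TensorProduct.map LinearMap.id (comul : H →ₗ[ℂ] H ⊗[ℂ] H))
    LinearMap.id)

/-! The point is that `h ▷ Λ` is again a left integral: in Sweedler notation
`b (h ▷ Λ) = (h₁ S(h₂) ▷ b)(h₃ ▷ Λ)`, the Yetter–Drinfeld condition swaps `h₂` and `h₃`, and then
the module-algebra axiom and the left invariance of `Λ` turn `(h₁ S(h₃) ▷ b)(h₂ ▷ Λ)` into
`h₁ ▷ ((S(h₂) ▷ b) Λ) = ε(b) (h ▷ Λ)`. Computing `Λ (h ▷ Λ)` once with `h ▷ Λ` a left integral and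
once with `Λ` a right integral, and using `Λ² = Λ`, gives `h ▷ Λ = ε(h) Λ`. Both products in
`A ⋊ H` then collapse to `Λ a ⊗ h` by the counit axiom. -/

/-- In Sweedler notation: if `h₁ ⊗ f h₂ = h₂ ⊗ f h₁`, then `h₁ ⊗ h₂ ⊗ f h₃ = h₁ ⊗ h₃ ⊗ f h₂`. -/
theorem lTensor_rTensor_comul_comul_eq_rightComm {R H M : Type*} [CommSemiring R]
    [AddCommMonoid H] [Module R H] [Coalgebra R H] [AddCommMonoid M] [Module R M]
    {f : H →ₗ[R] M}
    (hf : ∀ h : H, map LinearMap.id f (comul (R := R) h) =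
      map LinearMap.id f (TensorProduct.comm R H H (comul h))) (h : H) :
    f.lTensor (H ⊗[R] H) (comul.rTensor H (comul (R := R) h)) =
      f.lTensor (H ⊗[R] H) (rightComm R H H H (comul.rTensor H (comul h))) := by
  have hf' : f.lTensor H ∘ₗ comul =
      f.lTensor H ∘ₗ (TensorProduct.comm R H H).toLinearMap ∘ₗ comul :=
    LinearMap.ext hf
  have assoc_rightComm :
      (TensorProduct.assoc R H H H).toLinearMap ∘ₗ (rightComm R H H H).toLinearMap =
        (TensorProduct.comm R H H).toLinearMap.lTensor H ∘ₗ
          (TensorProduct.assoc R H H H).toLinearMap :=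
    TensorProduct.ext_threefold fun _ _ _ => rfl
  have assoc_rightComm_comul := LinearMap.congr_fun assoc_rightComm (comul.rTensor H (comul h))
  simp only [LinearMap.comp_apply, LinearEquiv.coe_coe] at assoc_rightComm_comul
  simp only [LinearMap.lTensor_tensor, LinearMap.comp_apply, LinearEquiv.coe_coe,
    assoc_rightComm_comul, coassoc_apply, ← LinearMap.lTensor_comp_apply, hf']

section ModuleAlgebra

variable {R H A : Type*} [CommSemiring R] [Semiring H] [HopfAlgebra R H]
  [Semiring A] [Algebra R A] {act : H →ₗ[R] A →ₗ[R] A}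

/-- In Sweedler notation: `(h₁ S(h₂) ▷ b)(h₃ ▷ c) = b (h ▷ c)`. -/
theorem mul'_map_act_mul_antipode_rTensor_comul (act_one : ∀ a : A, act 1 a = a)
    (b c : A) (h : H) :
    LinearMap.mul' R A
      (map (act.flip b ∘ₗ LinearMap.mul' R H ∘ₗ (HopfAlgebra.antipode R).lTensor H)
        (act.flip c) (comul.rTensor H (comul (R := R) h))) = b * act h c := by
  rw [LinearMap.map_rTensor]
  simp only [LinearMap.comp_assoc, HopfAlgebra.mul_antipode_lTensor_comul]
  rw [← LinearMap.comp_assoc, ← LinearMap.map_rTensor, rTensor_counit_comul]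
  simp [act_one]

variable (R) in
def IsLeftIntegral [CoalgebraStruct R A] (Λ : A) : Prop :=
  ∀ a : A, a * Λ = counit (R := R) a • Λ

/-- In Sweedler notation: `(h₁ S(h₃) ▷ b)(h₂ ▷ Λ) = ε(b) (h ▷ Λ)` for a left integral `Λ`. -/
theorem mul'_map_act_mul_antipode_rightComm_rTensor_comul [CoalgebraStruct R A]
    (act_mul : ∀ (h k : H) (a : A), act (h * k) a = act h (act k a))
    (modalg_mul : ∀ (h : H) (a b : A),
      act h (a * b) = LinearMap.mul' R A (map (act.flip a) (act.flip b) (comul h)))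
    (modcoalg_counit : ∀ (h : H) (a : A),
      counit (R := R) (act h a) = counit (R := R) h * counit (R := R) a)
    {Λ : A} (hΛ : IsLeftIntegral R Λ) (b : A) (h : H) :
    LinearMap.mul' R A
      (map (act.flip b ∘ₗ LinearMap.mul' R H ∘ₗ (HopfAlgebra.antipode R).lTensor H)
        (act.flip Λ) (rightComm R H H H (comul.rTensor H (comul (R := R) h)))) =
      counit (R := R) b • act h Λ := by
  set F := act.flip b ∘ₗ LinearMap.mul' R H ∘ₗ (HopfAlgebra.antipode R).lTensor H
  have on_tmul : ∀ (t : H ⊗[R] H) (z : H),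
      LinearMap.mul' R A (map F (act.flip Λ) (rightComm R H H H (t ⊗ₜ z))) =
        LinearMap.mul' R A
          (map (act.flip (act (HopfAlgebra.antipode R z) b)) (act.flip Λ) t) := by
    intro t z
    induction t using TensorProduct.induction_on with
    | zero => simp
    | tmul x y => simp [F, act_mul]
    | add t t' ht ht' => simp only [TensorProduct.add_tmul, map_add, ht, ht']
  have on_rTensor_comul :
      LinearMap.mul' R A ∘ₗ map F (act.flip Λ) ∘ₗ (rightComm R H H H).toLinearMap ∘ₗ
        comul.rTensor H = counit (R := R) b •
          (act.flip Λ ∘ₗ (TensorProduct.rid R H).toLinearMap ∘ₗ counit.lTensor H) := by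
    refine TensorProduct.ext' fun x z => ?_
    simp only [LinearMap.comp_apply, LinearEquiv.coe_coe, LinearMap.rTensor_tmul]
    rw [on_tmul, ← modalg_mul, hΛ, map_smul, modcoalg_counit, HopfAlgebra.counit_antipode]
    simp [mul_comm, smul_smul]
  have on_comul := LinearMap.congr_fun on_rTensor_comul (comul h)
  simp only [LinearMap.comp_apply, LinearEquiv.coe_coe, LinearMap.smul_apply] at on_comul
  rw [on_comul, lTensor_counit_comul]
  simp

theorem isLeftIntegral_act [CoalgebraStruct R A]
    (act_mul : ∀ (h k : H) (a : A), act (h * k) a = act h (act k a))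
    (act_one : ∀ a : A, act 1 a = a)
    (modalg_mul : ∀ (h : H) (a b : A),
      act h (a * b) = LinearMap.mul' R A (map (act.flip a) (act.flip b) (comul h)))
    (modcoalg_counit : ∀ (h : H) (a : A),
      counit (R := R) (act h a) = counit (R := R) h * counit (R := R) a)
    {Λ : A} (yd : ∀ h : H, map LinearMap.id (act.flip Λ) (comul (R := R) h) =
      map LinearMap.id (act.flip Λ) (TensorProduct.comm R H H (comul h)))
    (hΛ : IsLeftIntegral R Λ) (h : H) : IsLeftIntegral R (act h Λ) := by
  intro b
  rw [← mul'_map_act_mul_antipode_rTensor_comul act_one,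
    ← mul'_map_act_mul_antipode_rightComm_rTensor_comul act_mul modalg_mul modcoalg_counit hΛ,
    ← LinearMap.rTensor_comp_lTensor, LinearMap.comp_apply, LinearMap.comp_apply,
    lTensor_rTensor_comul_comul_eq_rightComm yd]

theorem act_eq_counit_smul_of_isLeftIntegral [CoalgebraStruct R A]
    (modcoalg_counit : ∀ (h : H) (a : A),
      counit (R := R) (act h a) = counit (R := R) h * counit (R := R) a)
    {Λ : A} (hidem : Λ * Λ = Λ) (hright : ∀ a : A, Λ * a = counit (R := R) a • Λ) {h : H}
    (hh : IsLeftIntegral R (act h Λ)) : act h Λ = counit (R := R) h • Λ := by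
  have hΛ : counit (R := R) Λ • Λ = Λ := by rw [← hright, hidem]
  calc act h Λ = counit (R := R) Λ • act h Λ := by rw [← map_smul, hΛ]
    _ = Λ * act h Λ := (hh Λ).symm
    _ = (counit (R := R) h * counit (R := R) Λ) • Λ := by rw [hright, modcoalg_counit]
    _ = counit (R := R) h • Λ := by rw [mul_smul, hΛ]

end ModuleAlgebra

section CrossedProduct

variable {H A : Type*} [Ring H] [Ring A] [HopfAlgebra ℂ H] [HopfAlgebra ℂ A]

theorem act2_tmul (act : H →ₗ[ℂ] A →ₗ[ℂ] A) (h : H) (a b : A) :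
    act2 act h (a ⊗ₜ b) = map (act.flip a) (act.flip b) (comul h) := by
  simp only [act2, LinearMap.comp_apply]
  induction comul (R := ℂ) h using TensorProduct.induction_on with
  | zero => simp
  | tmul x y => simp
  | add t t' ht ht' => simp only [map_add, LinearMap.add_apply, ht, ht']

theorem crossedMul_tmul_tmul (act : H →ₗ[ℂ] A →ₗ[ℂ] A) (a c : A) (h k : H) :
    crossedMul H A act ((a ⊗ₜ h) ⊗ₜ (c ⊗ₜ k)) =
      map (LinearMap.mulLeft ℂ a ∘ₗ act.flip c) (LinearMap.mulRight ℂ k) (comul h) := by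
  simp only [crossedMul, LinearMap.comp_apply, map_tmul, LinearMap.id_apply]
  induction comul (R := ℂ) h using TensorProduct.induction_on with
  | zero => simp only [TensorProduct.zero_tmul, TensorProduct.tmul_zero, map_zero]
  | tmul x y => simp
  | add t t' ht ht' => simp only [TensorProduct.add_tmul, TensorProduct.tmul_add, map_add, ht, ht']

end CrossedProduct

theorem stmt6_general {H A : Type*} [Ring H] [Ring A] [HopfAlgebra ℂ H] [HopfAlgebra ℂ A]
    (act : H →ₗ[ℂ] A →ₗ[ℂ] A)
    (act_mul : ∀ (h k : H) (a : A), act (h * k) a = act h (act k a))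
    (act_one : ∀ a : A, act 1 a = a)
    (modalg_mul : ∀ (h : H) (a b : A),
      act h (a * b) = LinearMap.mul' ℂ A (act2 act h (a ⊗ₜ[ℂ] b)))
    (modcoalg_counit : ∀ (h : H) (a : A),
      counit (R := ℂ) (act h a) = counit (R := ℂ) h * counit (R := ℂ) a)
    -- the Yetter–Drinfeld condition `h₍₁₎ ⊗ h₍₂₎ ▷ a = h₍₂₎ ⊗ h₍₁₎ ▷ a`:
    (yd : ∀ (h : H) (a : A),
      TensorProduct.map LinearMap.id (act.flip a) (comul (R := ℂ) h) =
        TensorProduct.map LinearMap.id (act.flip a)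
          ((TensorProduct.comm ℂ H H) (comul (R := ℂ) h)))
    -- the Haar integral of `A`:
    (Λ : A) (hidem : Λ * Λ = Λ)
    (hleft : ∀ a : A, a * Λ = counit (R := ℂ) a • Λ)
    (hright : ∀ a : A, Λ * a = counit (R := ℂ) a • Λ) :
    ∀ (a : A) (h : H),
      crossedMul H A act ((Λ ⊗ₜ[ℂ] (1 : H)) ⊗ₜ[ℂ] (a ⊗ₜ[ℂ] h)) = (Λ * a) ⊗ₜ[ℂ] h ∧
      crossedMul H A act ((a ⊗ₜ[ℂ] h) ⊗ₜ[ℂ] (Λ ⊗ₜ[ℂ] (1 : H))) = (Λ * a) ⊗ₜ[ℂ] h := by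
  have act_eq_counit_smul : ∀ k : H, act k Λ = counit (R := ℂ) k • Λ := fun k =>
    act_eq_counit_smul_of_isLeftIntegral modcoalg_counit hidem hright <|
      isLeftIntegral_act act_mul act_one (fun k a b => by rw [modalg_mul, act2_tmul])
        modcoalg_counit (fun k => yd k Λ) hleft k
  have act_flip_Λ : act.flip Λ = LinearMap.toSpanSingleton ℂ A Λ ∘ₗ counit :=
    LinearMap.ext fun k => by simp [act_eq_counit_smul]
  intro a h
  constructor
  · rw [crossedMul_tmul_tmul]
    simp [Algebra.TensorProduct.one_def, act_one]
  · rw [crossedMul_tmul_tmul, act_flip_Λ, ← LinearMap.comp_assoc, ← LinearMap.map_rTensor,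
      rTensor_counit_comul]
    simp [hleft, hright]

/-- If `A` is a left `H`-module algebra and `H`-module coalgebra
satisfying the Yetter–Drinfeld condition, with Haar integral `Λ`, then `Λ ⊗ 1` is central
in the crossed product `A ⋊ H`:
`(Λ ⊗ 1) ⬝ (a ⊗ h) = Λ a ⊗ h = (a ⊗ h) ⬝ (Λ ⊗ 1)`. -/
theorem stmt6 {H A : Type*} [Ring H] [Ring A] [HopfAlgebra ℂ H] [HopfAlgebra ℂ A]
    (act : H →ₗ[ℂ] A →ₗ[ℂ] A)
    (act_mul : ∀ (h k : H) (a : A), act (h * k) a = act h (act k a))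
    (act_one : ∀ a : A, act 1 a = a)
    (modalg_mul : ∀ (h : H) (a b : A),
      act h (a * b) = LinearMap.mul' ℂ A (act2 act h (a ⊗ₜ[ℂ] b)))
    (modalg_one : ∀ h : H, act h 1 = counit (R := ℂ) h • (1 : A))
    (modcoalg_comul : ∀ (h : H) (a : A),
      comul (R := ℂ) (act h a) = act2 act h (comul (R := ℂ) a))
    (modcoalg_counit : ∀ (h : H) (a : A),
      counit (R := ℂ) (act h a) = counit (R := ℂ) h * counit (R := ℂ) a)
    -- the Yetter–Drinfeld condition `h₍₁₎ ⊗ h₍₂₎ ▷ a = h₍₂₎ ⊗ h₍₁₎ ▷ a`: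
    (yd : ∀ (h : H) (a : A),
      TensorProduct.map LinearMap.id (act.flip a) (comul (R := ℂ) h) =
        TensorProduct.map LinearMap.id (act.flip a)
          ((TensorProduct.comm ℂ H H) (comul (R := ℂ) h)))
    -- the Haar integral of `A`:
    (Λ : A) (hidem : Λ * Λ = Λ)
    (hleft : ∀ a : A, a * Λ = counit (R := ℂ) a • Λ)
    (hright : ∀ a : A, Λ * a = counit (R := ℂ) a • Λ) :
    ∀ (a : A) (h : H),
      crossedMul H A act ((Λ ⊗ₜ[ℂ] (1 : H)) ⊗ₜ[ℂ] (a ⊗ₜ[ℂ] h)) = (Λ * a) ⊗ₜ[ℂ] h ∧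
      crossedMul H A act ((a ⊗ₜ[ℂ] h) ⊗ₜ[ℂ] (Λ ⊗ₜ[ℂ] (1 : H))) = (Λ * a) ⊗ₜ[ℂ] h :=
  stmt6_general act act_mul act_one modalg_mul modcoalg_counit yd Λ hidem hleft hright

end
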